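/- Let H₁, H₂, H₃ be Hilbert spaces and u : H₁ ⊗ H₂ → H₁ unitary, u⁻ : H₂ ⊗ H₃ → H₃ unitary. Define w : H₁ ⊗ H₃ → H₁ ⊗ H₃ by w = (u ⊗ 1_{H₃}) ∘ (1_{H₁} ⊗ (u⁻)*) composed with the associator H₁ ⊗ (H₂ ⊗ H₃) ≅ (H₁ ⊗ H₂) ⊗ H₃. Then w is unitary, and for every a ∈ B(H₁) satisfying w(a ⊗ 1)w* well-defined, one has w (a ⊗ 1_{H₃}) w* = ϑ(a) ⊗ 1_{H₃}, where ϑ(a) := u (a ⊗ 1_{H₂}) u*. -/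

import Mathlib

/-!
On the vectors `x ⊗ u⁻(y ⊗ z)` the map `w` preserves inner products, because `u` and `u⁻` are
isometries; since `u⁻` is onto, these vectors span a dense subspace, so `w` is an isometry. Its
range contains the vectors `u(x ⊗ y) ⊗ z`, which span a dense subspace because `u` is onto, so `w`
is unitary. Finally `w (a ⊗ 1)` and `(ϑ(a) ⊗ 1) w` both send `x ⊗ u⁻(y ⊗ z)` to
`u(ax ⊗ y) ⊗ z`.
-/

open ContinuousLinearMap Set Submodule

section DenseSpan

variable {𝕜 E F G : Type*} [NontriviallyNormedField 𝕜]
  [NormedAddCommGroup E] [NormedSpace 𝕜 E] [NormedAddCommGroup F] [NormedSpace 𝕜 F]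
  [NormedAddCommGroup G] [NormedSpace 𝕜 G]

theorem ContinuousLinearMap.apply_mem_of_dense_span {s : Set E} (hs : Dense (span 𝕜 s : Set E))
    (f : E →L[𝕜] F) {q : Submodule 𝕜 F} (hq : IsClosed (q : Set F)) (h : MapsTo f s q) (v : E) :
    f v ∈ q := by
  have hspan : span 𝕜 s ≤ q.comap (f : E →ₗ[𝕜] F) := span_le.2 h
  have hclosed : IsClosed (q.comap (f : E →ₗ[𝕜] F) : Set E) := hq.preimage f.continuous
  exact hclosed.closure_subset_iff.2 hspan (hs v)

theorem dense_span_image {s : Set E} (hs : Dense (span 𝕜 s : Set E)) (f : E →L[𝕜] F)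
    (hf : DenseRange f) : Dense (span 𝕜 (f '' s) : Set F) := by
  change Dense (span 𝕜 ((f : E →ₗ[𝕜] F) '' s) : Set F)
  rw [span_image, map_coe]
  exact hf.dense_image f.continuous hs

/-- Continuity in each variable separately lets us approximate `B x y` first in `y ∈ span t`,
then in `x ∈ span s`. -/
theorem dense_span_image2 (B : E →L[𝕜] F →L[𝕜] G)
    (hB : Dense (span 𝕜 {v | ∃ x y, v = B x y} : Set G)) {s : Set E} {t : Set F}
    (hs : Dense (span 𝕜 s : Set E)) (ht : Dense (span 𝕜 t : Set F)) :
    Dense (span 𝕜 (image2 (B · ·) s t) : Set G) := by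
  set V := (span 𝕜 (image2 (B · ·) s t)).topologicalClosure
  have hV : IsClosed (V : Set G) := isClosed_topologicalClosure _
  have h_left : ∀ x ∈ s, ∀ y, B x y ∈ V := fun x hx ↦
    (B x).apply_mem_of_dense_span ht hV fun y hy ↦
      le_topologicalClosure _ (subset_span (mem_image2_of_mem hx hy))
  have h_all : ∀ x y, B x y ∈ V := fun x y ↦
    (B.flip y).apply_mem_of_dense_span hs hV (fun x hx ↦ h_left x hx y) x
  have hle : span 𝕜 {v | ∃ x y, v = B x y} ≤ V :=
    span_le.2 fun _ ⟨x, y, hv⟩ ↦ hv ▸ h_all x y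
  rw [dense_iff_topologicalClosure_eq_top, eq_top_iff] at hB ⊢
  exact hB.trans (topologicalClosure_minimal _ hle hV)

end DenseSpan

section Unitary

variable {𝕜 E F : Type*} [RCLike 𝕜]
  [NormedAddCommGroup E] [InnerProductSpace 𝕜 E] [CompleteSpace E]
  [NormedAddCommGroup F] [InnerProductSpace 𝕜 F] [CompleteSpace F]

theorem ContinuousLinearMap.adjoint_comp_self_eq_one_of_dense_span {s : Set E}
    (hs : Dense (span 𝕜 s : Set E)) (w : E →L[𝕜] F)
    (h : ∀ ξ ∈ s, ∀ η ∈ s, inner 𝕜 (w ξ) (w η) = inner 𝕜 ξ η) : adjoint w ∘L w = 1 := by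
  refine ext_on hs fun ξ hξ ↦ ext_inner_right 𝕜 fun η ↦ ?_
  have : innerSL 𝕜 (adjoint w (w ξ)) = innerSL 𝕜 ξ :=
    ext_on hs fun η hη ↦ by simpa [adjoint_inner_left] using h ξ hξ η hη
  simpa using congr($this η)

theorem ContinuousLinearMap.comp_adjoint_eq_one_of_denseRange {w : E →L[𝕜] F}
    (hw : adjoint w ∘L w = 1) (hd : DenseRange w) : w ∘L adjoint w = 1 :=
  ext_on (hd.mono subset_span) <| by
    rintro _ ⟨ξ, rfl⟩
    simp [← comp_apply (adjoint w) w, hw]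

end Unitary

/-- The tensor products `H₁ ⊗ H₂`, `H₂ ⊗ H₃`, `H₁ ⊗ H₃` are modelled by `H₁₂, H₂₃, H₁₃` with
bilinear maps `t12, t23, t13` that multiply inner products and have dense span; `ampl2 a` and
`ampl3 a` stand for `a ⊗ 1`. -/
theorem rebracketting_unitary_implements_theta_general
    {H₁ H₂ H₃ H₁₂ H₂₃ H₁₃ : Type*}
    [NormedAddCommGroup H₁] [InnerProductSpace ℂ H₁] [CompleteSpace H₁]
    [NormedAddCommGroup H₂] [InnerProductSpace ℂ H₂]
    [NormedAddCommGroup H₃] [InnerProductSpace ℂ H₃] [CompleteSpace H₃]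
    [NormedAddCommGroup H₁₂] [InnerProductSpace ℂ H₁₂] [CompleteSpace H₁₂]
    [NormedAddCommGroup H₂₃] [InnerProductSpace ℂ H₂₃] [CompleteSpace H₂₃]
    [NormedAddCommGroup H₁₃] [InnerProductSpace ℂ H₁₃] [CompleteSpace H₁₃]
    (t12 : H₁ →L[ℂ] H₂ →L[ℂ] H₁₂) (t23 : H₂ →L[ℂ] H₃ →L[ℂ] H₂₃)
    (t13 : H₁ →L[ℂ] H₃ →L[ℂ] H₁₃)
    (h12 : ∀ x x' y y', inner ℂ (t12 x y) (t12 x' y') = (inner ℂ x x' : ℂ) * (inner ℂ y y' : ℂ))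
    (h23 : ∀ y y' z z', inner ℂ (t23 y z) (t23 y' z') = (inner ℂ y y' : ℂ) * (inner ℂ z z' : ℂ))
    (h13 : ∀ x x' z z', inner ℂ (t13 x z) (t13 x' z') = (inner ℂ x x' : ℂ) * (inner ℂ z z' : ℂ))
    (h12d : (Submodule.span ℂ {v : H₁₂ | ∃ x y, v = t12 x y}).topologicalClosure = ⊤)
    (h23d : (Submodule.span ℂ {v : H₂₃ | ∃ y z, v = t23 y z}).topologicalClosure = ⊤)
    (h13d : (Submodule.span ℂ {v : H₁₃ | ∃ x z, v = t13 x z}).topologicalClosure = ⊤)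
    (ampl2 : (H₁ →L[ℂ] H₁) → (H₁₂ →L[ℂ] H₁₂))
    (h_ampl2 : ∀ a x y, ampl2 a (t12 x y) = t12 (a x) y)
    (ampl3 : (H₁ →L[ℂ] H₁) → (H₁₃ →L[ℂ] H₁₃))
    (h_ampl3 : ∀ a x z, ampl3 a (t13 x z) = t13 (a x) z)
    (u : H₁₂ →L[ℂ] H₁) (hu₁ : u ∘L adjoint u = 1) (hu₂ : adjoint u ∘L u = 1)
    (um : H₂₃ →L[ℂ] H₃) (hum₁ : um ∘L adjoint um = 1) (hum₂ : adjoint um ∘L um = 1)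
    (w : H₁₃ →L[ℂ] H₁₃)
    (h_w : ∀ (x : H₁) (y : H₂) (z : H₃), w (t13 x (um (t23 y z))) = t13 (u (t12 x y)) z) :
    (w ∘L adjoint w = 1 ∧ adjoint w ∘L w = 1) ∧
    (∀ a : H₁ →L[ℂ] H₁,
      w ∘L ampl3 a ∘L adjoint w = ampl3 (u ∘L ampl2 a ∘L adjoint u)) := by
  rw [← dense_iff_topologicalClosure_eq_top] at h12d h23d h13d
  have hu_surj : Function.Surjective u := fun v ↦ ⟨adjoint u v, congr($hu₁ v)⟩
  have hum_surj : Function.Surjective um := fun v ↦ ⟨adjoint um v, congr($hum₁ v)⟩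
  have hu_iso := (inner_map_map_iff_adjoint_comp_self u).2 hu₂
  have hum_iso := (inner_map_map_iff_adjoint_comp_self um).2 hum₂
  have h_dom_dense :
      Dense (span ℂ (image2 (t13 · ·) univ (um '' image2 (t23 · ·) univ univ)) : Set H₁₃) :=
    dense_span_image2 t13 h13d (by simp)
      (dense_span_image (by simpa [image2, eq_comm] using h23d) um hum_surj.denseRange)
  have h_ran_dense :
      Dense (span ℂ (image2 (t13 · ·) (u '' image2 (t12 · ·) univ univ) univ) : Set H₁₃) :=
    dense_span_image2 t13 h13d
      (dense_span_image (by simpa [image2, eq_comm] using h12d) u hu_surj.denseRange) (by simp)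
  have hw_iso : adjoint w ∘L w = 1 := by
    refine w.adjoint_comp_self_eq_one_of_dense_span h_dom_dense ?_
    rintro _ ⟨x, -, _, ⟨_, ⟨y, -, z, -, rfl⟩, rfl⟩, rfl⟩
      _ ⟨x', -, _, ⟨_, ⟨y', -, z', -, rfl⟩, rfl⟩, rfl⟩
    simp only [h_w, h13, hu_iso, hum_iso, h12, h23]
    ring
  have hw_range : DenseRange w := by
    refine h_ran_dense.mono (span_le (p := LinearMap.range (w : H₁₃ →ₗ[ℂ] H₁₃)).2 ?_)
    rintro _ ⟨_, ⟨_, ⟨x, -, y, -, rfl⟩, rfl⟩, z, -, rfl⟩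
    exact ⟨_, h_w x y z⟩
  have hw_coiso := w.comp_adjoint_eq_one_of_denseRange hw_iso hw_range
  refine ⟨⟨hw_coiso, hw_iso⟩, fun a ↦ ?_⟩
  have h_intertwine : w ∘L ampl3 a = ampl3 (u ∘L ampl2 a ∘L adjoint u) ∘L w := by
    refine ext_on h_dom_dense ?_
    rintro _ ⟨x, -, _, ⟨_, ⟨y, -, z, -, rfl⟩, rfl⟩, rfl⟩
    have hu_inv : adjoint u (u (t12 x y)) = t12 x y := congr($hu₂ _)
    simp only [comp_apply, h_ampl3, h_w, hu_inv, h_ampl2]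
  rw [← comp_assoc, h_intertwine, comp_assoc, hw_coiso]
  rfl

/-- Let `u : H₁ ⊗ H₂ → H₁` and `u⁻ : H₂ ⊗ H₃ → H₃` be unitaries and let
`w : H₁ ⊗ H₃ → H₁ ⊗ H₃` be `(u ⊗ 1)(1 ⊗ (u⁻)*)` composed with the associator,
i.e. `w (x ⊗ u⁻(y ⊗ z)) = u(x ⊗ y) ⊗ z`.  Then `w` is unitary and
`w (a ⊗ 1) w* = ϑ(a) ⊗ 1` where `ϑ(a) = u (a ⊗ 1) u*`.  Tensor products are
encoded by Hilbert spaces `H₁₂, H₂₃, H₁₃` with maps `t12, t23, t13` multiplying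
inner products and with dense span, and the amplifications `ampl2 a = a ⊗ 1_{H₂}`
(on `H₁₂`), `ampl3 a = a ⊗ 1_{H₃}` (on `H₁₃`) are characterized on elementary
tensors. -/
theorem rebracketting_unitary_implements_theta
    {H₁ H₂ H₃ H₁₂ H₂₃ H₁₃ : Type*}
    [NormedAddCommGroup H₁] [InnerProductSpace ℂ H₁] [CompleteSpace H₁]
    [NormedAddCommGroup H₂] [InnerProductSpace ℂ H₂] [CompleteSpace H₂]
    [NormedAddCommGroup H₃] [InnerProductSpace ℂ H₃] [CompleteSpace H₃]
    [NormedAddCommGroup H₁₂] [InnerProductSpace ℂ H₁₂] [CompleteSpace H₁₂]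
    [NormedAddCommGroup H₂₃] [InnerProductSpace ℂ H₂₃] [CompleteSpace H₂₃]
    [NormedAddCommGroup H₁₃] [InnerProductSpace ℂ H₁₃] [CompleteSpace H₁₃]
    (t12 : H₁ →L[ℂ] H₂ →L[ℂ] H₁₂) (t23 : H₂ →L[ℂ] H₃ →L[ℂ] H₂₃)
    (t13 : H₁ →L[ℂ] H₃ →L[ℂ] H₁₃)
    (h12 : ∀ x x' y y', inner ℂ (t12 x y) (t12 x' y') = (inner ℂ x x' : ℂ) * (inner ℂ y y' : ℂ))
    (h23 : ∀ y y' z z', inner ℂ (t23 y z) (t23 y' z') = (inner ℂ y y' : ℂ) * (inner ℂ z z' : ℂ))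
    (h13 : ∀ x x' z z', inner ℂ (t13 x z) (t13 x' z') = (inner ℂ x x' : ℂ) * (inner ℂ z z' : ℂ))
    (h12d : (Submodule.span ℂ {v : H₁₂ | ∃ x y, v = t12 x y}).topologicalClosure = ⊤)
    (h23d : (Submodule.span ℂ {v : H₂₃ | ∃ y z, v = t23 y z}).topologicalClosure = ⊤)
    (h13d : (Submodule.span ℂ {v : H₁₃ | ∃ x z, v = t13 x z}).topologicalClosure = ⊤)
    (ampl2 : (H₁ →L[ℂ] H₁) → (H₁₂ →L[ℂ] H₁₂))
    (h_ampl2 : ∀ a x y, ampl2 a (t12 x y) = t12 (a x) y)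
    (ampl3 : (H₁ →L[ℂ] H₁) → (H₁₃ →L[ℂ] H₁₃))
    (h_ampl3 : ∀ a x z, ampl3 a (t13 x z) = t13 (a x) z)
    (u : H₁₂ →L[ℂ] H₁) (hu₁ : u ∘L adjoint u = 1) (hu₂ : adjoint u ∘L u = 1)
    (um : H₂₃ →L[ℂ] H₃) (hum₁ : um ∘L adjoint um = 1) (hum₂ : adjoint um ∘L um = 1)
    (w : H₁₃ →L[ℂ] H₁₃)
    (h_w : ∀ (x : H₁) (y : H₂) (z : H₃), w (t13 x (um (t23 y z))) = t13 (u (t12 x y)) z) :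
    (w ∘L adjoint w = 1 ∧ adjoint w ∘L w = 1) ∧
    (∀ a : H₁ →L[ℂ] H₁,
      w ∘L ampl3 a ∘L adjoint w = ampl3 (u ∘L ampl2 a ∘L adjoint u)) :=
  rebracketting_unitary_implements_theta_general t12 t23 t13 h12 h23 h13 h12d h23d h13d ampl2
    h_ampl2 ampl3 h_ampl3 u hu₁ hu₂ um hum₁ hum₂ w h_w
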